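/- arXiv:2405.04765 — 2 statements merged into one kernel-verified Lean document; each statement's English description precedes it below -/
import Mathlib

section
/- Let σ > 0 and let γ denote the centered Gaussian measure on ℝ with variance σ². If f : ℝ → ℝ is differentiable, f is integrable with respect to γ, the function x ↦ x·f(x) is integrable with respect to γ, and the derivative f' is integrable with respect to γ, then ∫ x·f(x) dγ(x) = σ² · ∫ f'(x) dγ(x). -/
open MeasureTheory ProbabilityTheory Real Filter Set
open scoped ENNReal NNReal

lemma stein_aux_hasDerivAt_pdf (σ : ℝ) (hσ : 0 < σ) (x : ℝ) :
    HasDerivAt (gaussianPDFReal 0 (σ ^ 2).toNNReal)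
      (-(x / σ ^ 2) * gaussianPDFReal 0 (σ ^ 2).toNNReal x) x := by
  have hv : ((σ ^ 2).toNNReal : ℝ) = σ ^ 2 := Real.coe_toNNReal _ (sq_nonneg σ)
  have hσ2 : (σ ^ 2 : ℝ) ≠ 0 := by positivity
  have hfun : gaussianPDFReal 0 (σ ^ 2).toNNReal
      = fun y : ℝ => (√(2 * π * σ ^ 2))⁻¹ * rexp (-y ^ 2 / (2 * σ ^ 2)) := by
    funext y; simp [gaussianPDFReal, hv]
  have h1 : HasDerivAt (fun x : ℝ => -x ^ 2 / (2 * σ ^ 2)) (-(x / σ ^ 2)) x := by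
    have := ((hasDerivAt_pow 2 x).neg).div_const (2 * σ ^ 2)
    refine this.congr_deriv ?_
    field_simp
    ring
  have h2 := (h1.exp).const_mul (√(2 * π * σ ^ 2))⁻¹
  rw [hfun]
  refine h2.congr_deriv ?_
  beta_reduce
  ring

/-- **Stein's lemma / Gaussian integration by parts on ℝ.** -/
theorem stein_identity_real (σ : ℝ) (hσ : 0 < σ) (f : ℝ → ℝ)
    (hf : Differentiable ℝ f)
    (hint_f : Integrable f (gaussianReal 0 (σ ^ 2).toNNReal))
    (hint_xf : Integrable (fun x => x * f x) (gaussianReal 0 (σ ^ 2).toNNReal))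
    (hint_f' : Integrable (deriv f) (gaussianReal 0 (σ ^ 2).toNNReal)) :
    ∫ x, x * f x ∂(gaussianReal 0 (σ ^ 2).toNNReal) =
      σ ^ 2 * ∫ x, deriv f x ∂(gaussianReal 0 (σ ^ 2).toNNReal) := by
  have hσ2 : (σ ^ 2 : ℝ) ≠ 0 := by positivity
  set v : ℝ≥0 := (σ ^ 2).toNNReal with hvdef
  have hv0 : v ≠ 0 := by rw [hvdef, Ne, Real.toNNReal_eq_zero, not_le]; positivity
  set φ : ℝ → ℝ := gaussianPDFReal 0 v with hφdef
  have hφpos : ∀ x, 0 ≤ φ x := fun x => gaussianPDFReal_nonneg 0 v x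
  have hmeas : Measurable fun x => (φ x).toNNReal :=
    (measurable_gaussianPDFReal 0 v).real_toNNReal
  have hγ : gaussianReal 0 v = volume.withDensity (fun x => ((φ x).toNNReal : ℝ≥0∞)) := by
    rw [gaussianReal_of_var_ne_zero 0 hv0]
    rfl
  have hconv : ∀ g : ℝ → ℝ, ∫ x, g x ∂(gaussianReal 0 v) = ∫ x, g x * φ x := by
    intro g
    rw [hγ, integral_withDensity_eq_integral_smul hmeas]
    congr 1; funext x
    simp [NNReal.smul_def, Real.coe_toNNReal _ (hφpos x), mul_comm]
  have convInt : ∀ g : ℝ → ℝ, Integrable g (gaussianReal 0 v) →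
      Integrable (fun x => g x * φ x) volume := by
    intro g hg
    rw [hγ, integrable_withDensity_iff_integrable_smul hmeas] at hg
    apply hg.congr
    filter_upwards with x
    simp [NNReal.smul_def, Real.coe_toNNReal _ (hφpos x), mul_comm]
  set G : ℝ → ℝ := fun x => σ ^ 2 * (f x * φ x) with hGdef
  set h : ℝ → ℝ := fun x => σ ^ 2 * (deriv f x * φ x) - (x * f x) * φ x with hhdef
  have hG : ∀ x, HasDerivAt G (h x) x := by
    intro x
    have hd := (((hf x).hasDerivAt.mul (stein_aux_hasDerivAt_pdf σ hσ x)).const_mul (σ ^ 2))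
    refine hd.congr_deriv ?_
    simp only [hhdef]
    field_simp
    ring
  have hInt_h : Integrable h volume :=
    ((convInt _ hint_f').const_mul (σ ^ 2)).sub (convInt _ hint_xf)
  have hInt_G : Integrable G volume := (convInt f hint_f).const_mul (σ ^ 2)
  have htop : Filter.Tendsto G atTop (nhds 0) :=
    tendsto_zero_of_hasDerivAt_of_integrableOn_Ioi (a := 0) (fun x _ => hG x)
      hInt_h.integrableOn hInt_G.integrableOn
  have hbot : Filter.Tendsto G atBot (nhds 0) :=
    tendsto_zero_of_hasDerivAt_of_integrableOn_Iic (a := 0) (fun x _ => hG x)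
      hInt_h.integrableOn hInt_G.integrableOn
  have hIoi : ∫ x in Ioi (0:ℝ), h x = 0 - G 0 :=
    integral_Ioi_of_hasDerivAt_of_tendsto' (fun x _ => hG x) hInt_h.integrableOn htop
  have hIic : ∫ x in Iic (0:ℝ), h x = G 0 - 0 :=
    integral_Iic_of_hasDerivAt_of_tendsto' (fun x _ => hG x) hInt_h.integrableOn hbot
  have htot : ∫ x, h x = 0 := by
    rw [← intervalIntegral.integral_Iic_add_Ioi (b := (0:ℝ)) hInt_h.integrableOn hInt_h.integrableOn,
      hIoi, hIic]
    ring
  have hsplit : ∫ x, h x =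
      (σ ^ 2 * ∫ x, deriv f x * φ x) - ∫ x, (x * f x) * φ x := by
    rw [hhdef]
    rw [integral_sub ((convInt _ hint_f').const_mul (σ ^ 2)) (convInt _ hint_xf),
      integral_const_mul]
  rw [hconv (fun x => x * f x), hconv (deriv f)]
  have := htot.symm.trans hsplit
  linarith [this]
end

section
/- Let σ > 0, n ≥ 1, let a ∈ ℝⁿ, and let δ be distributed as the multivariate Gaussian N(0, σ²Iₙ) on ℝⁿ (the product of i.i.d. centered Gaussians of variance σ²). Consider the single-sample zeroth-order gradient estimator for the linear function x ↦ ⟨a, x⟩, namely g(δ) = (δ/σ²)·⟨a, δ⟩. Then its mean squared error satisfies, exactly, E[‖g(δ) − a‖²] = (n + 1)·‖a‖², where ‖·‖ is the Euclidean norm on ℝⁿ. -/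
open MeasureTheory ProbabilityTheory
open MeasureTheory Real Filter ProbabilityTheory
open scoped ENNReal NNReal

lemma myInt {b : ℝ} (hb : 0 < b) (k : ℕ) :
    Integrable (fun x : ℝ => x ^ k * Real.exp (-b * x ^ 2)) := by
  have h := integrable_rpow_mul_exp_neg_mul_sq hb (s := (k : ℝ))
    (lt_of_lt_of_le neg_one_lt_zero (Nat.cast_nonneg k))
  simpa [Real.rpow_natCast] using h

lemma myTendstoTop {b : ℝ} (hb : 0 < b) (k : ℕ) :
    Tendsto (fun x : ℝ => x ^ k * Real.exp (-b * x ^ 2)) atTop (nhds 0) := by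
  have hlim : Tendsto (fun x : ℝ => Real.exp (-(1/2) * x)) atTop (nhds 0) := by
    have : Tendsto (fun x : ℝ => -(1/2) * x) atTop atBot :=
      (tendsto_const_mul_atBot_of_neg (by norm_num)).mpr tendsto_id
    exact tendsto_exp_atBot.comp this
  have h := (rpow_mul_exp_neg_mul_sq_isLittleO_exp_neg hb (k : ℝ)).trans_tendsto hlim
  simpa [Real.rpow_natCast] using h

lemma myTendstoBot {b : ℝ} (hb : 0 < b) (k : ℕ) :
    Tendsto (fun x : ℝ => x ^ k * Real.exp (-b * x ^ 2)) atBot (nhds 0) := by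
  have h : Tendsto ((fun x : ℝ => (-1 : ℝ) ^ k * (x ^ k * Real.exp (-b * x ^ 2))) ∘ (fun x : ℝ => -x))
      atBot (nhds 0) := by
    refine Tendsto.comp ?_ tendsto_neg_atBot_atTop
    simpa using (myTendstoTop hb k).const_mul ((-1 : ℝ) ^ k)
  have heq : (fun x : ℝ => x ^ k * Real.exp (-b * x ^ 2)) =
      ((fun x : ℝ => (-1 : ℝ) ^ k * (x ^ k * Real.exp (-b * x ^ 2))) ∘ (fun x : ℝ => -x)) := by
    funext x
    have h1 : (-1 : ℝ) ^ k * (-x) ^ k = x ^ k := by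
      rw [← mul_pow]; norm_num
    simp only [Function.comp, neg_sq, ← mul_assoc, h1]
  rw [heq]
  exact h

lemma integral_deriv_zero (F f' : ℝ → ℝ) (hd : ∀ x, HasDerivAt F (f' x) x)
    (hi : Integrable f') (htop : Tendsto F atTop (nhds 0))
    (hbot : Tendsto F atBot (nhds 0)) : ∫ x, f' x = 0 := by
  rw [← intervalIntegral.integral_Iic_add_Ioi (b := (0:ℝ)) hi.integrableOn hi.integrableOn,
    MeasureTheory.integral_Iic_of_hasDerivAt_of_tendsto' (fun x _ => hd x) hi.integrableOn hbot,
    MeasureTheory.integral_Ioi_of_hasDerivAt_of_tendsto' (fun x _ => hd x) hi.integrableOn htop]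
  ring

lemma Jrec {b : ℝ} (hb : 0 < b) (k : ℕ) :
    ∫ x : ℝ, x ^ (k + 2) * Real.exp (-b * x ^ 2) =
      ((k + 1 : ℝ) / (2 * b)) * ∫ x : ℝ, x ^ k * Real.exp (-b * x ^ 2) := by
  have hd : ∀ x : ℝ, HasDerivAt (fun x : ℝ => x ^ (k + 1) * Real.exp (-b * x ^ 2))
      ((k + 1 : ℝ) * (x ^ k * Real.exp (-b * x ^ 2))
        - 2 * b * (x ^ (k + 2) * Real.exp (-b * x ^ 2))) x := by
    intro x
    have h1 : HasDerivAt (fun x : ℝ => x ^ (k + 1)) ((k + 1 : ℝ) * x ^ k) x := by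
      simpa using hasDerivAt_pow (k + 1) x
    have h2 : HasDerivAt (fun x : ℝ => Real.exp (-b * x ^ 2))
        (Real.exp (-b * x ^ 2) * (-b * (2 * x))) x := by
      have hx : HasDerivAt (fun x : ℝ => -b * x ^ 2) (-b * (2 * x)) x := by
        simpa using ((hasDerivAt_pow 2 x).const_mul (-b))
      exact hx.exp
    have := h1.mul h2
    refine this.congr_deriv ?_
    ring
  have h0 := integral_deriv_zero _ _ hd
    (((myInt hb k).const_mul _).sub ((myInt hb (k+2)).const_mul _))
    (myTendstoTop hb (k+1)) (myTendstoBot hb (k+1))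
  rw [integral_sub ((myInt hb k).const_mul _) ((myInt hb (k+2)).const_mul _),
    MeasureTheory.integral_const_mul, MeasureTheory.integral_const_mul] at h0
  have h2b : (2 * b) ≠ 0 := by positivity
  rw [div_mul_eq_mul_div, eq_div_iff h2b]
  linarith [h0]

lemma J1 {b : ℝ} (hb : 0 < b) :
    ∫ x : ℝ, x ^ 1 * Real.exp (-b * x ^ 2) = 0 := by
  have hd : ∀ x : ℝ, HasDerivAt (fun x : ℝ => -(2 * b)⁻¹ * Real.exp (-b * x ^ 2))
      (x ^ 1 * Real.exp (-b * x ^ 2)) x := by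
    intro x
    have h2 : HasDerivAt (fun x : ℝ => Real.exp (-b * x ^ 2))
        (Real.exp (-b * x ^ 2) * (-b * (2 * x))) x := by
      have hx : HasDerivAt (fun x : ℝ => -b * x ^ 2) (-b * (2 * x)) x := by
        simpa using ((hasDerivAt_pow 2 x).const_mul (-b))
      exact hx.exp
    have := h2.const_mul (-(2 * b)⁻¹)
    refine this.congr_deriv ?_
    field_simp
  have htop : Tendsto (fun x : ℝ => -(2 * b)⁻¹ * Real.exp (-b * x ^ 2)) atTop (nhds 0) := by
    have := (myTendstoTop hb 0).const_mul (-(2 * b)⁻¹)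
    simpa using this
  have hbot : Tendsto (fun x : ℝ => -(2 * b)⁻¹ * Real.exp (-b * x ^ 2)) atBot (nhds 0) := by
    have := (myTendstoBot hb 0).const_mul (-(2 * b)⁻¹)
    simpa using this
  exact integral_deriv_zero _ _ hd (myInt hb 1) htop hbot

noncomputable def Mk (σ : ℝ) (k : ℕ) : ℝ :=
  ∫ x : ℝ, x ^ k ∂(gaussianReal 0 (σ ^ 2).toNNReal)

section
variable {σ : ℝ} (hσ : 0 < σ)

lemma hV : ((σ ^ 2).toNNReal : ℝ) = σ ^ 2 := Real.coe_toNNReal _ (sq_nonneg σ)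

lemma hVne (hσ : 0 < σ) : (σ ^ 2).toNNReal ≠ 0 := by
  simp only [ne_eq, Real.toNNReal_eq_zero, not_le]
  positivity

lemma pdf_eq (hσ : 0 < σ) (x : ℝ) :
    gaussianPDFReal 0 (σ ^ 2).toNNReal x =
      (Real.sqrt (2 * π * σ ^ 2))⁻¹ * Real.exp (-(2 * σ ^ 2)⁻¹ * x ^ 2) := by
  rw [gaussianPDFReal, hV]
  congr 1
  congr 1
  ring

lemma gauss_integral (hσ : 0 < σ) (g : ℝ → ℝ) :
    ∫ x, g x ∂(gaussianReal 0 (σ ^ 2).toNNReal) =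
      ∫ x : ℝ, gaussianPDFReal 0 (σ ^ 2).toNNReal x * g x := by
  rw [gaussianReal_of_var_ne_zero 0 (hVne hσ)]
  have hmeas : Measurable (fun x => (gaussianPDFReal 0 (σ ^ 2).toNNReal x).toNNReal) :=
    (measurable_gaussianPDFReal 0 _).real_toNNReal
  have hd : gaussianPDF 0 (σ ^ 2).toNNReal =
      fun x => ((gaussianPDFReal 0 (σ ^ 2).toNNReal x).toNNReal : ℝ≥0∞) := by
    funext x; rfl
  rw [hd, integral_withDensity_eq_integral_smul hmeas]
  congr 1
  funext x
  rw [NNReal.smul_def, smul_eq_mul, Real.coe_toNNReal _ (gaussianPDFReal_nonneg _ _ _)]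

lemma gauss_integrable_pow (hσ : 0 < σ) (k : ℕ) :
    Integrable (fun x : ℝ => x ^ k) (gaussianReal 0 (σ ^ 2).toNNReal) := by
  rw [gaussianReal_of_var_ne_zero 0 (hVne hσ)]
  have hmeas : Measurable (fun x => (gaussianPDFReal 0 (σ ^ 2).toNNReal x).toNNReal) :=
    (measurable_gaussianPDFReal 0 _).real_toNNReal
  have hd : gaussianPDF 0 (σ ^ 2).toNNReal =
      fun x => ((gaussianPDFReal 0 (σ ^ 2).toNNReal x).toNNReal : ℝ≥0∞) := by
    funext x; rfl
  rw [hd]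
  refine (integrable_withDensity_iff_integrable_coe_smul hmeas).mpr ?_
  have hb : (0:ℝ) < (2 * σ ^ 2)⁻¹ := by positivity
  have : (fun x : ℝ => ((gaussianPDFReal 0 (σ ^ 2).toNNReal x).toNNReal : ℝ) • x ^ k)
      = fun x : ℝ => (Real.sqrt (2 * π * σ ^ 2))⁻¹ * (x ^ k * Real.exp (-(2 * σ ^ 2)⁻¹ * x ^ 2)) := by
    funext x
    rw [smul_eq_mul, Real.coe_toNNReal _ (gaussianPDFReal_nonneg _ _ _), pdf_eq hσ]
    ring
  rw [this]
  exact (myInt hb k).const_mul _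

lemma Mk_eq (hσ : 0 < σ) (k : ℕ) :
    Mk σ k = (Real.sqrt (2 * π * σ ^ 2))⁻¹ *
      ∫ x : ℝ, x ^ k * Real.exp (-(2 * σ ^ 2)⁻¹ * x ^ 2) := by
  rw [Mk, gauss_integral hσ]
  rw [← MeasureTheory.integral_const_mul]
  congr 1
  funext x
  rw [pdf_eq hσ]
  ring

lemma cJ0 (hσ : 0 < σ) :
    (Real.sqrt (2 * π * σ ^ 2))⁻¹ * ∫ x : ℝ, x ^ 0 * Real.exp (-(2 * σ ^ 2)⁻¹ * x ^ 2) = 1 := by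
  have hfun : (fun x : ℝ => x ^ 0 * Real.exp (-(2 * σ ^ 2)⁻¹ * x ^ 2))
      = fun x : ℝ => Real.exp (-(2 * σ ^ 2)⁻¹ * x ^ 2) := by
    funext x; rw [pow_zero, one_mul]
  rw [hfun, integral_gaussian]
  have h2 : π / (2 * σ ^ 2)⁻¹ = 2 * π * σ ^ 2 := by
    field_simp
  rw [h2, inv_mul_cancel₀]
  positivity

lemma Mk0 : Mk σ 0 = 1 := by simp [Mk]

lemma Mk1 (hσ : 0 < σ) : Mk σ 1 = 0 := by
  have hb : (0:ℝ) < (2 * σ ^ 2)⁻¹ := by positivity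
  rw [Mk_eq hσ, J1 hb, mul_zero]

lemma J2eq (hσ : 0 < σ) :
    ∫ x : ℝ, x ^ 2 * Real.exp (-(2 * σ ^ 2)⁻¹ * x ^ 2)
      = σ ^ 2 * ∫ x : ℝ, x ^ 0 * Real.exp (-(2 * σ ^ 2)⁻¹ * x ^ 2) := by
  have hb : (0:ℝ) < (2 * σ ^ 2)⁻¹ := by positivity
  have h : ∫ x : ℝ, x ^ 2 * Real.exp (-(2 * σ ^ 2)⁻¹ * x ^ 2)
      = (((0:ℕ) : ℝ) + 1) / (2 * (2 * σ ^ 2)⁻¹) *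
        ∫ x : ℝ, x ^ 0 * Real.exp (-(2 * σ ^ 2)⁻¹ * x ^ 2) := Jrec hb 0
  have hs : (((0:ℕ) : ℝ) + 1) / (2 * (2 * σ ^ 2)⁻¹) = σ ^ 2 := by
    field_simp
    norm_num
  rw [h, hs]

lemma Mk2 (hσ : 0 < σ) : Mk σ 2 = σ ^ 2 := by
  rw [Mk_eq hσ, J2eq hσ, ← mul_assoc, mul_comm _ (σ ^ 2), mul_assoc, cJ0 hσ, mul_one]

lemma Mk3 (hσ : 0 < σ) : Mk σ 3 = 0 := by
  have hb : (0:ℝ) < (2 * σ ^ 2)⁻¹ := by positivity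
  have h : ∫ x : ℝ, x ^ 3 * Real.exp (-(2 * σ ^ 2)⁻¹ * x ^ 2)
      = (((1:ℕ) : ℝ) + 1) / (2 * (2 * σ ^ 2)⁻¹) *
        ∫ x : ℝ, x ^ 1 * Real.exp (-(2 * σ ^ 2)⁻¹ * x ^ 2) := Jrec hb 1
  rw [Mk_eq hσ, h, J1 hb, mul_zero, mul_zero]

lemma Mk4 (hσ : 0 < σ) : Mk σ 4 = 3 * σ ^ 4 := by
  have hb : (0:ℝ) < (2 * σ ^ 2)⁻¹ := by positivity
  have h : ∫ x : ℝ, x ^ 4 * Real.exp (-(2 * σ ^ 2)⁻¹ * x ^ 2)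
      = (((2:ℕ) : ℝ) + 1) / (2 * (2 * σ ^ 2)⁻¹) *
        ∫ x : ℝ, x ^ 2 * Real.exp (-(2 * σ ^ 2)⁻¹ * x ^ 2) := Jrec hb 2
  have hs : (((2:ℕ) : ℝ) + 1) / (2 * (2 * σ ^ 2)⁻¹) = 3 * σ ^ 2 := by
    field_simp; ring
  rw [Mk_eq hσ, h, hs, J2eq hσ]
  linear_combination 3 * σ ^ 4 * cJ0 hσ

end

section
variable {n : ℕ} {μ : Measure ℝ} [IsProbabilityMeasure μ]

lemma prod_pow_ite (δ : Fin n → ℝ) (i : Fin n) (s : ℕ) :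
    ∏ m : Fin n, (δ m) ^ (if m = i then s else 0) = (δ i) ^ s := by
  have h : ∀ m : Fin n, (δ m) ^ (if m = i then s else 0)
      = (if m = i then (δ m) ^ s else 1) := by
    intro m; split_ifs <;> simp
  rw [Finset.prod_congr rfl (fun m _ => h m)]
  simp

lemma pi_int_single (i : Fin n) (p : ℕ) :
    ∫ δ : Fin n → ℝ, (δ i) ^ p ∂(Measure.pi fun _ => μ) = ∫ x, x ^ p ∂μ := by
  letI : MeasureSpace ℝ := ⟨μ⟩
  have hv : (Measure.pi fun _ : Fin n => μ) = volume := (MeasureTheory.volume_pi).symm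
  have hfun : (fun δ : Fin n → ℝ => (δ i) ^ p)
      = fun δ : Fin n → ℝ => ∏ m, (fun (m : Fin n) (x : ℝ) => if m = i then x ^ p else 1) m (δ m) := by
    funext δ
    simp
  rw [hv, hfun,
    MeasureTheory.integral_fintype_prod_volume_eq_prod (fun m x => if m = i then x ^ p else 1)]
  have h : ∀ m : Fin n, (∫ x : ℝ, (if m = i then x ^ p else 1)) = (if m = i then ∫ x : ℝ, x ^ p else 1) := by
    intro m; split_ifs <;> simp
  rw [Finset.prod_congr rfl (fun m _ => h m)]
  simp [Finset.prod_ite_eq']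
  rfl

lemma pi_int_pair (i j : Fin n) (hij : i ≠ j) (p q : ℕ) :
    ∫ δ : Fin n → ℝ, (δ i) ^ p * (δ j) ^ q ∂(Measure.pi fun _ => μ)
      = (∫ x, x ^ p ∂μ) * ∫ x, x ^ q ∂μ := by
  letI : MeasureSpace ℝ := ⟨μ⟩
  have hv : (Measure.pi fun _ : Fin n => μ) = volume := (MeasureTheory.volume_pi).symm
  set f : Fin n → ℝ → ℝ := fun m x => if m = i then x ^ p else if m = j then x ^ q else 1 with hf
  have key : ∀ g : ℝ → ℝ → ℝ → ℝ, True := fun _ => trivial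
  have hprod : ∀ δ : Fin n → ℝ, ∏ m, f m (δ m) = (δ i) ^ p * (δ j) ^ q := by
    intro δ
    rw [← Finset.prod_subset (Finset.subset_univ ({i, j} : Finset (Fin n)))
      (fun m _ hm => by
        simp only [Finset.mem_insert, Finset.mem_singleton, not_or] at hm
        simp [hf, hm.1, hm.2])]
    rw [Finset.prod_insert (by simp [hij])]
    simp [hf, hij, hij.symm]
  have hfun : (fun δ : Fin n → ℝ => (δ i) ^ p * (δ j) ^ q)
      = fun δ : Fin n → ℝ => ∏ m, f m (δ m) := by
    funext δ; rw [hprod]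
  rw [hv, hfun, MeasureTheory.integral_fintype_prod_volume_eq_prod f]
  have h : ∀ m : Fin n, (∫ x : ℝ, f m x)
      = (if m = i then ∫ x : ℝ, x ^ p else if m = j then ∫ x : ℝ, x ^ q else 1) := by
    intro m; simp only [hf]; split_ifs <;> simp
  rw [Finset.prod_congr rfl (fun m _ => h m)]
  rw [← Finset.prod_subset (Finset.subset_univ ({i, j} : Finset (Fin n)))
    (fun m _ hm => by
      simp only [Finset.mem_insert, Finset.mem_singleton, not_or] at hm
      simp [hm.1, hm.2])]
  rw [Finset.prod_insert (by simp [hij])]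
  simp [hij, hij.symm]
  rfl

lemma pi_int_triple (i j k : Fin n) (hij : i ≠ j) (hik : i ≠ k) (hjk : j ≠ k) (p q r : ℕ) :
    ∫ δ : Fin n → ℝ, (δ i) ^ p * ((δ j) ^ q * (δ k) ^ r) ∂(Measure.pi fun _ => μ)
      = (∫ x, x ^ p ∂μ) * ((∫ x, x ^ q ∂μ) * ∫ x, x ^ r ∂μ) := by
  letI : MeasureSpace ℝ := ⟨μ⟩
  have hv : (Measure.pi fun _ : Fin n => μ) = volume := (MeasureTheory.volume_pi).symm
  set f : Fin n → ℝ → ℝ :=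
    fun m x => if m = i then x ^ p else if m = j then x ^ q else if m = k then x ^ r else 1 with hf
  have hprod : ∀ δ : Fin n → ℝ, ∏ m, f m (δ m) = (δ i) ^ p * ((δ j) ^ q * (δ k) ^ r) := by
    intro δ
    rw [← Finset.prod_subset (Finset.subset_univ ({i, j, k} : Finset (Fin n)))
      (fun m _ hm => by
        simp only [Finset.mem_insert, Finset.mem_singleton, not_or] at hm
        simp [hf, hm.1, hm.2.1, hm.2.2])]
    rw [Finset.prod_insert (by simp [hij, hik]), Finset.prod_insert (by simp [hjk])]
    simp [hf, hij, hik, hjk, hij.symm, hik.symm, hjk.symm]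
  have hfun : (fun δ : Fin n → ℝ => (δ i) ^ p * ((δ j) ^ q * (δ k) ^ r))
      = fun δ : Fin n → ℝ => ∏ m, f m (δ m) := by
    funext δ; rw [hprod]
  rw [hv, hfun, MeasureTheory.integral_fintype_prod_volume_eq_prod f]
  have h : ∀ m : Fin n, (∫ x : ℝ, f m x)
      = (if m = i then ∫ x : ℝ, x ^ p else if m = j then ∫ x : ℝ, x ^ q
          else if m = k then ∫ x : ℝ, x ^ r else 1) := by
    intro m; simp only [hf]; split_ifs <;> simp
  rw [Finset.prod_congr rfl (fun m _ => h m)]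
  rw [← Finset.prod_subset (Finset.subset_univ ({i, j, k} : Finset (Fin n)))
    (fun m _ hm => by
      simp only [Finset.mem_insert, Finset.mem_singleton, not_or] at hm
      simp [hm.1, hm.2.1, hm.2.2])]
  rw [Finset.prod_insert (by simp [hij, hik]), Finset.prod_insert (by simp [hjk])]
  simp [hij, hik, hjk, hij.symm, hik.symm, hjk.symm]
  rfl

lemma pi_integrable_mono (hint : ∀ s : ℕ, Integrable (fun x : ℝ => x ^ s) μ)
    (e : Fin n → ℕ) :
    Integrable (fun δ : Fin n → ℝ => ∏ m, (δ m) ^ (e m)) (Measure.pi fun _ => μ) := by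
  letI : MeasureSpace ℝ := ⟨μ⟩
  have hv : (Measure.pi fun _ : Fin n => μ) = volume := (MeasureTheory.volume_pi).symm
  rw [hv]
  exact Integrable.fintype_prod (f := fun m x => x ^ (e m)) (fun m => hint (e m))

lemma pi_integrable_22 (hint : ∀ s : ℕ, Integrable (fun x : ℝ => x ^ s) μ) (i j k : Fin n) :
    Integrable (fun δ : Fin n → ℝ => (δ i) ^ 2 * (δ j * δ k)) (Measure.pi fun _ => μ) := by
  have he : (fun δ : Fin n → ℝ => (δ i) ^ 2 * (δ j * δ k))
      = fun δ : Fin n → ℝ => ∏ m, (δ m) ^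
          ((if m = i then 2 else 0) + ((if m = j then 1 else 0) + (if m = k then 1 else 0))) := by
    funext δ
    simp only [pow_add]
    rw [Finset.prod_mul_distrib, Finset.prod_mul_distrib, prod_pow_ite, prod_pow_ite, prod_pow_ite]
    simp [pow_one]
  rw [he]
  exact pi_integrable_mono hint _

lemma pi_integrable_11 (hint : ∀ s : ℕ, Integrable (fun x : ℝ => x ^ s) μ) (i j : Fin n) :
    Integrable (fun δ : Fin n → ℝ => δ i * δ j) (Measure.pi fun _ => μ) := by
  have he : (fun δ : Fin n → ℝ => δ i * δ j)
      = fun δ : Fin n → ℝ => ∏ m, (δ m) ^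
          ((if m = i then 1 else 0) + (if m = j then 1 else 0)) := by
    funext δ
    simp only [pow_add]
    rw [Finset.prod_mul_distrib, prod_pow_ite, prod_pow_ite]
    simp [pow_one]
  rw [he]
  exact pi_integrable_mono hint _

end

section Main
variable {σ : ℝ} {n : ℕ}

noncomputable abbrev gmu (σ : ℝ) : Measure ℝ := gaussianReal 0 (σ ^ 2).toNNReal

lemma mom2 (hσ : 0 < σ) (i j : Fin n) :
    ∫ δ : Fin n → ℝ, δ i * δ j ∂(Measure.pi fun _ => gmu σ)
      = if j = i then σ ^ 2 else 0 := by
  by_cases h : j = i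
  · subst h
    have hfun : (fun δ : Fin n → ℝ => δ j * δ j) = fun δ : Fin n → ℝ => (δ j) ^ 2 := by
      funext δ; ring
    rw [hfun, pi_int_single, if_pos rfl]
    exact Mk2 hσ
  · have hfun : (fun δ : Fin n → ℝ => δ i * δ j)
        = fun δ : Fin n → ℝ => (δ i) ^ 1 * (δ j) ^ 1 := by
      funext δ; ring
    rw [hfun, pi_int_pair i j (fun he => h he.symm), if_neg h]
    have h1 : (∫ x : ℝ, x ^ 1 ∂gmu σ) = 0 := Mk1 hσ
    rw [h1, zero_mul]

lemma mom4 (hσ : 0 < σ) (i j k : Fin n) :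
    ∫ δ : Fin n → ℝ, (δ i) ^ 2 * (δ j * δ k) ∂(Measure.pi fun _ => gmu σ)
      = if j = k then (if j = i then 3 * σ ^ 4 else σ ^ 4) else 0 := by
  by_cases hjk : j = k
  · subst hjk
    by_cases hji : j = i
    · subst hji
      have hfun : (fun δ : Fin n → ℝ => (δ j) ^ 2 * (δ j * δ j))
          = fun δ : Fin n → ℝ => (δ j) ^ 4 := by funext δ; ring
      rw [hfun, pi_int_single, if_pos rfl, if_pos rfl]
      exact Mk4 hσ
    · have hfun : (fun δ : Fin n → ℝ => (δ i) ^ 2 * (δ j * δ j))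
          = fun δ : Fin n → ℝ => (δ i) ^ 2 * (δ j) ^ 2 := by funext δ; ring
      rw [hfun, pi_int_pair i j (fun he => hji he.symm), if_pos rfl, if_neg hji]
      have h2 : (∫ x : ℝ, x ^ 2 ∂gmu σ) = σ ^ 2 := Mk2 hσ
      rw [h2]; ring
  · by_cases hji : j = i
    · subst hji
      have hik : j ≠ k := hjk
      have hfun : (fun δ : Fin n → ℝ => (δ j) ^ 2 * (δ j * δ k))
          = fun δ : Fin n → ℝ => (δ j) ^ 3 * (δ k) ^ 1 := by funext δ; ring
      rw [hfun, pi_int_pair j k hik, if_neg hjk]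
      have h3 : (∫ x : ℝ, x ^ 3 ∂gmu σ) = 0 := Mk3 hσ
      rw [h3, zero_mul]
    · by_cases hki : k = i
      · subst hki
        have hfun : (fun δ : Fin n → ℝ => (δ k) ^ 2 * (δ j * δ k))
            = fun δ : Fin n → ℝ => (δ k) ^ 3 * (δ j) ^ 1 := by funext δ; ring
        rw [hfun, pi_int_pair k j (fun he => hji he.symm), if_neg hjk]
        have h3 : (∫ x : ℝ, x ^ 3 ∂gmu σ) = 0 := Mk3 hσ
        rw [h3, zero_mul]
      · have hfun : (fun δ : Fin n → ℝ => (δ i) ^ 2 * (δ j * δ k))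
            = fun δ : Fin n → ℝ => (δ i) ^ 2 * ((δ j) ^ 1 * (δ k) ^ 1) := by funext δ; ring
        rw [hfun, pi_int_triple i j k (fun he => hji he.symm) (fun he => hki he.symm) hjk,
          if_neg hjk]
        have h1 : (∫ x : ℝ, x ^ 1 ∂gmu σ) = 0 := Mk1 hσ
        rw [h1, zero_mul, mul_zero]

end Main

section Thm
variable {σ : ℝ} {n : ℕ} (a : Fin n → ℝ)

lemma sumform2 (i : Fin n) :
    (fun δ : Fin n → ℝ => δ i * ∑ j, a j * δ j)
      = fun δ : Fin n → ℝ => ∑ j, a j * (δ i * δ j) := by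
  funext δ
  rw [Finset.mul_sum]
  exact Finset.sum_congr rfl fun j _ => by ring

lemma sumform1 (i : Fin n) :
    (fun δ : Fin n → ℝ => (δ i) ^ 2 * ((∑ j, a j * δ j) * ∑ k, a k * δ k))
      = fun δ : Fin n → ℝ => ∑ j, ∑ k, (a j * a k) * ((δ i) ^ 2 * (δ j * δ k)) := by
  funext δ
  rw [Finset.sum_mul_sum, Finset.mul_sum]
  refine Finset.sum_congr rfl fun j _ => ?_
  rw [Finset.mul_sum]
  exact Finset.sum_congr rfl fun k _ => by ring

lemma II2 (hσ : 0 < σ) (i : Fin n) :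
    Integrable (fun δ : Fin n → ℝ => δ i * ∑ j, a j * δ j) (Measure.pi fun _ => gmu σ) := by
  rw [sumform2]
  exact integrable_finset_sum _ fun j _ =>
    (pi_integrable_11 (fun s => gauss_integrable_pow hσ s) i j).const_mul _

lemma II1 (hσ : 0 < σ) (i : Fin n) :
    Integrable (fun δ : Fin n → ℝ => (δ i) ^ 2 * ((∑ j, a j * δ j) * ∑ k, a k * δ k))
      (Measure.pi fun _ => gmu σ) := by
  rw [sumform1]
  exact integrable_finset_sum _ fun j _ => integrable_finset_sum _ fun k _ =>
    (pi_integrable_22 (fun s => gauss_integrable_pow hσ s) i j k).const_mul _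

lemma P2 (hσ : 0 < σ) (i : Fin n) :
    ∫ δ : Fin n → ℝ, δ i * ∑ j, a j * δ j ∂(Measure.pi fun _ => gmu σ) = σ ^ 2 * a i := by
  rw [sumform2]
  rw [integral_finset_sum _ fun j _ =>
    (pi_integrable_11 (fun s => gauss_integrable_pow hσ s) i j).const_mul _]
  have h : ∀ j : Fin n, ∫ δ : Fin n → ℝ, a j * (δ i * δ j) ∂(Measure.pi fun _ => gmu σ)
      = a j * (if j = i then σ ^ 2 else 0) := by
    intro j
    rw [MeasureTheory.integral_const_mul, mom2 hσ]
  rw [Finset.sum_congr rfl fun j _ => h j]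
  simp [mul_ite, Finset.sum_ite_eq', mul_comm]

lemma P1 (hσ : 0 < σ) (i : Fin n) :
    ∫ δ : Fin n → ℝ, (δ i) ^ 2 * ((∑ j, a j * δ j) * ∑ k, a k * δ k)
        ∂(Measure.pi fun _ => gmu σ)
      = σ ^ 4 * ((∑ j, a j ^ 2) + 2 * a i ^ 2) := by
  rw [sumform1]
  rw [integral_finset_sum _ fun j _ => integrable_finset_sum _ fun k _ =>
    (pi_integrable_22 (fun s => gauss_integrable_pow hσ s) i j k).const_mul _]
  have h : ∀ j : Fin n, (∫ δ : Fin n → ℝ, ∑ k, (a j * a k) * ((δ i) ^ 2 * (δ j * δ k))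
        ∂(Measure.pi fun _ => gmu σ))
      = a j * a j * (if j = i then 3 * σ ^ 4 else σ ^ 4) := by
    intro j
    rw [integral_finset_sum _ fun k _ =>
      (pi_integrable_22 (fun s => gauss_integrable_pow hσ s) i j k).const_mul _]
    have hk : ∀ k : Fin n, (∫ δ : Fin n → ℝ, (a j * a k) * ((δ i) ^ 2 * (δ j * δ k))
          ∂(Measure.pi fun _ => gmu σ))
        = if j = k then a j * a k * (if j = i then 3 * σ ^ 4 else σ ^ 4) else 0 := by
      intro k
      rw [MeasureTheory.integral_const_mul, mom4 hσ]
      split_ifs with h1 h2 <;> ring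
    rw [Finset.sum_congr rfl fun k _ => hk k]
    simp [Finset.sum_ite_eq]
  rw [Finset.sum_congr rfl fun j _ => h j]
  have h2 : ∀ j : Fin n, a j * a j * (if j = i then 3 * σ ^ 4 else σ ^ 4)
      = σ ^ 4 * a j ^ 2 + (if j = i then 2 * σ ^ 4 * a j ^ 2 else 0) := by
    intro j; split_ifs <;> ring
  rw [Finset.sum_congr rfl fun j _ => h2 j, Finset.sum_add_distrib, ← Finset.mul_sum]
  simp [Finset.sum_ite_eq']
  ring

end Thm

/-- The product measure on `ℝⁿ` whose `n` coordinates are i.i.d. centered Gaussians of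
variance `σ²`, i.e. the multivariate Gaussian `N(0, σ²Iₙ)`. -/
noncomputable def gaussPi (σ : ℝ) (n : ℕ) : Measure (Fin n → ℝ) :=
  Measure.pi fun _ => gaussianReal 0 (σ ^ 2).toNNReal

/-- **Exact MSE of the single-sample zeroth-order estimator for a linear loss.**
For `δ ∼ N(0, σ²Iₙ)` and `g(δ) = (δ/σ²)·⟨a,δ⟩`, one has
`E[‖g(δ) − a‖²] = (n+1)·‖a‖²`. -/
theorem single_sample_mse (σ : ℝ) (hσ : 0 < σ) (n : ℕ) (hn : 1 ≤ n) (a : Fin n → ℝ) :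
    ∫ δ : Fin n → ℝ,
        ∑ i : Fin n, ((δ i / σ ^ 2) * (∑ j : Fin n, a j * δ j) - a i) ^ 2
        ∂(gaussPi σ n) =
      ((n : ℝ) + 1) * ∑ i : Fin n, a i ^ 2 := by
  have hg : gaussPi σ n = (Measure.pi fun _ : Fin n => gmu σ) := rfl
  rw [hg]
  have hexp : (fun δ : Fin n → ℝ => ∑ i, ((δ i / σ ^ 2) * (∑ j, a j * δ j) - a i) ^ 2)
      = fun δ : Fin n → ℝ => ∑ i,
          ((σ ^ 2)⁻¹ * (σ ^ 2)⁻¹ * ((δ i) ^ 2 * ((∑ j, a j * δ j) * ∑ k, a k * δ k))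
            - 2 * (σ ^ 2)⁻¹ * a i * (δ i * ∑ j, a j * δ j) + a i ^ 2) := by
    funext δ
    refine Finset.sum_congr rfl fun i _ => ?_
    rw [div_eq_mul_inv]
    ring
  rw [hexp]
  have hInt : ∀ i : Fin n, Integrable (fun δ : Fin n → ℝ =>
      (σ ^ 2)⁻¹ * (σ ^ 2)⁻¹ * ((δ i) ^ 2 * ((∑ j, a j * δ j) * ∑ k, a k * δ k))
        - 2 * (σ ^ 2)⁻¹ * a i * (δ i * ∑ j, a j * δ j) + a i ^ 2)
      (Measure.pi fun _ => gmu σ) :=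
    fun i => (((II1 a hσ i).const_mul _).sub ((II2 a hσ i).const_mul _)).add (integrable_const _)
  rw [integral_finset_sum _ fun i _ => hInt i]
  have hterm : ∀ i : Fin n,
      (∫ δ : Fin n → ℝ,
        ((σ ^ 2)⁻¹ * (σ ^ 2)⁻¹ * ((δ i) ^ 2 * ((∑ j, a j * δ j) * ∑ k, a k * δ k))
          - 2 * (σ ^ 2)⁻¹ * a i * (δ i * ∑ j, a j * δ j) + a i ^ 2)
        ∂(Measure.pi fun _ => gmu σ))
      = (∑ j, a j ^ 2) + a i ^ 2 := by
    intro i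
    have hI1 : Integrable (fun δ : Fin n → ℝ =>
        (σ ^ 2)⁻¹ * (σ ^ 2)⁻¹ * ((δ i) ^ 2 * ((∑ j, a j * δ j) * ∑ k, a k * δ k)))
        (Measure.pi fun _ => gmu σ) := (II1 a hσ i).const_mul _
    have hI2 : Integrable (fun δ : Fin n → ℝ =>
        2 * (σ ^ 2)⁻¹ * a i * (δ i * ∑ j, a j * δ j))
        (Measure.pi fun _ => gmu σ) := (II2 a hσ i).const_mul _
    have hI12 : Integrable (fun δ : Fin n → ℝ =>
        (σ ^ 2)⁻¹ * (σ ^ 2)⁻¹ * ((δ i) ^ 2 * ((∑ j, a j * δ j) * ∑ k, a k * δ k))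
          - 2 * (σ ^ 2)⁻¹ * a i * (δ i * ∑ j, a j * δ j))
        (Measure.pi fun _ => gmu σ) := hI1.sub hI2
    rw [integral_add hI12 (integrable_const _),
      integral_sub hI1 hI2,
      MeasureTheory.integral_const_mul, MeasureTheory.integral_const_mul,
      P1 a hσ i, P2 a hσ i, integral_const]
    simp only [measure_univ, probReal_univ, ENNReal.toReal_one, smul_eq_mul, one_mul, mul_one]
    have hs : (σ : ℝ) ≠ 0 := ne_of_gt hσ
    field_simp
    ring
  rw [Finset.sum_congr rfl fun i _ => hterm i, Finset.sum_add_distrib, Finset.sum_const,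
    Finset.card_univ, Fintype.card_fin, nsmul_eq_mul]
  ring
end
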